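/- Let g: 𝒳 → 𝒴 be a piecewise bijective function with finite partition {𝒳_i}, let X have distribution P_X ≪ μ^N supported on 𝒳, Y = g(X). Consider the suboptimal reconstructor r_sub defined by r_sub(y) = g^{-1}(y) if y ∈ 𝒴_b, r_sub(y) = g_k^{-1}(y) if y ∈ 𝒴_k \ 𝒴_b, and taking any value in 𝒳_k otherwise, where k = argmax_i P_X(𝒳_i ∪ 𝒳_b) and 𝒴_k = g(𝒳_k). Its error probability is P̂_e = 1 − P_X(𝒳_k ∪ 𝒳_b), and with K̄ = ess sup_{y∈𝒴} card(g^{-1}[{y}]) the information loss satisfies L(X→Y) ≤ 1 − P_b + P̂_e log(K̄ − 1). -/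

import Mathlib

open MeasureTheory ProbabilityTheory Filter Set
open scoped ENNReal NNReal Topology

noncomputable section

/-- Base-2 entropy of the discrete (atomic) part of a measure. -/
def pmfEntropy {β : Type*} [MeasurableSpace β] (ν : Measure β) : ℝ≥0∞ :=
  ∑' b : β, ENNReal.ofReal (-((ν {b}).toReal * Real.logb 2 (ν {b}).toReal))

/-- Conditional entropy `H(X | Y)` (of a discretely supported `X`) given `Y`,
computed through the regular conditional distribution of `X` given `Y`. -/
def condEnt {α β γ : Type*} [MeasurableSpace α] [MeasurableSpace β] [StandardBorelSpace β]
    [Nonempty β] [MeasurableSpace γ] (μ : Measure α) [IsFiniteMeasure μ]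
    (X : α → β) (Y : α → γ) : ℝ≥0∞ :=
  ∫⁻ y, pmfEntropy (condDistrib X Y μ y) ∂(μ.map Y)

/-- Componentwise uniform quantization `X̂ₙ = ⌊2ⁿ X⌋ / 2ⁿ`. -/
def quant {ι : Type*} (n : ℕ) (x : ι → ℝ) : ι → ℝ :=
  fun i => (⌊(2 : ℝ) ^ n * x i⌋ : ℝ) / (2 : ℝ) ^ n

/-- `H(X̂ₙ)`, entropy of the quantized input. -/
def entQ {α ι : Type*} [MeasurableSpace α] [Fintype ι] (μ : Measure α)
    (X : α → ι → ℝ) (n : ℕ) : ℝ≥0∞ :=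
  pmfEntropy (μ.map fun a => quant n (X a))

/-- `H(X̂ₙ | Y)`. -/
def condEntQ {α ι γ : Type*} [MeasurableSpace α] [Fintype ι] [MeasurableSpace γ]
    (μ : Measure α) [IsFiniteMeasure μ] (X : α → ι → ℝ) (Y : α → γ) (n : ℕ) : ℝ≥0∞ :=
  condEnt μ (fun a => quant n (X a)) Y

/-- Information loss `L(X→Y) = H(X|Y) = limₙ H(X̂ₙ|Y)`; since the sequence
`H(X̂ₙ|Y)` is nondecreasing in `n` the limit equals the supremum. -/
def infoLoss {α ι γ : Type*} [MeasurableSpace α] [Fintype ι] [MeasurableSpace γ]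
    (μ : Measure α) [IsFiniteMeasure μ] (X : α → ι → ℝ) (Y : α → γ) : ℝ≥0∞ :=
  ⨆ n : ℕ, condEntQ μ X Y n

/-- The sequence `H(X̂ₙ|Y)/H(X̂ₙ)` whose limit is the relative information loss. -/
def relLossSeq {α ι γ : Type*} [MeasurableSpace α] [Fintype ι] [MeasurableSpace γ]
    (μ : Measure α) [IsFiniteMeasure μ] (X : α → ι → ℝ) (Y : α → γ) (n : ℕ) : ℝ :=
  (condEntQ μ X Y n).toReal / (entQ μ X n).toReal

/-- The sequence `I(X̂ₙ;Y)/H(X̂ₙ) = (H(X̂ₙ) - H(X̂ₙ|Y))/H(X̂ₙ)` whose limit is the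
relative information transfer. -/
def relTransSeq {α ι γ : Type*} [MeasurableSpace α] [Fintype ι] [MeasurableSpace γ]
    (μ : Measure α) [IsFiniteMeasure μ] (X : α → ι → ℝ) (Y : α → γ) (n : ℕ) : ℝ :=
  ((entQ μ X n).toReal - (condEntQ μ X Y n).toReal) / (entQ μ X n).toReal

/-- `H(ν̂ₙ)` for a measure on `ℝᴺ` (quantized entropy of a distribution). -/
def entQM {ι : Type*} [Fintype ι] (ν : Measure (ι → ℝ)) (n : ℕ) : ℝ≥0∞ :=
  pmfEntropy (ν.map (quant n))


/-- A **piecewise bijective function** (PBF) `g : 𝒳 → 𝒴`, `𝒳, 𝒴 ⊆ ℝᴺ`, w.r.t. an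
input distribution `ν`: there is a (countable) partition `{𝒳ᵢ}` of `𝒳 = s` into
measurable sets of positive `ν`-measure on each of which `g` is injective (hence a
bijection onto its image), the Jacobian `J` of `g` exists on the pieces, and
`det J ≠ 0` `ν`-a.s.  (Surjectivity onto `𝒴 = g(𝒳)` is automatic.) -/
structure IsPBF {ι I : Type*} [Fintype ι] [Countable I]
    (g : (ι → ℝ) → ι → ℝ) (s : Set (ι → ℝ)) (pieces : I → Set (ι → ℝ))
    (J : (ι → ℝ) → (ι → ℝ) →L[ℝ] (ι → ℝ)) (ν : Measure (ι → ℝ)) : Prop where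
  meas : Measurable g
  measSet : ∀ i, MeasurableSet (pieces i)
  disj : Pairwise (Function.onFun Disjoint pieces)
  cover : (⋃ i, pieces i) = s
  pos : ∀ i, 0 < ν (pieces i)
  injOn : ∀ i, Set.InjOn g (pieces i)
  deriv : ∀ i, ∀ x ∈ pieces i, HasFDerivWithinAt g (J x) (pieces i) x
  det_ne : ∀ᵐ x ∂ν, (J x).det ≠ 0

/-- Differential entropy (base 2) of a distribution `ν ≪ volume` on `ℝᴺ`:
`h(ν) = −∫ log₂ (dν/dλ) dν = −∫ f log₂ f dλ`. -/
def diffEnt {ι : Type*} [Fintype ι] (ν : Measure (ι → ℝ)) : ℝ :=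
  - ∫ x, Real.logb 2 ((ν.rnDeriv volume x).toReal) ∂ν

/-!
Quantise the input: given `Y = y`, the quantised input `X̂ₙ` takes at most as many values as `y`
has preimages, a.e. at most `K̄`, and at most one value when `y ∈ 𝒴_b = g(𝒳_b)`. Guessing
`X̂ₙ` as the quantisation of `r(y)`, Fano's inequality bounds `H(X̂ₙ | Y = y)` by
`1 + Pr(guess wrong | y) log₂ (K̄ - 1)` off `𝒴_b` and by `0` on it. Integrating over `y`, and
using that quantisation can only hide reconstruction errors, gives
`H(X̂ₙ | Y) ≤ 1 - P_b + P̂_e log₂ (K̄ - 1)` for every `n`. The error probability is bookkeeping: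
`r(g(x)) = x` for `x ∈ 𝒳` exactly when `x ∈ 𝒳_k ∪ 𝒳_b`.
-/

lemma measurable_quant {ι : Type*} [Fintype ι] (n : ℕ) : Measurable (quant (ι := ι) n) := by
  unfold quant
  fun_prop

section FiniteEntropy

lemma Finset.sum_neg_mul_logb_le_sum_mul_of_kraft {γ : Type*} (T : Finset γ) {p c : γ → ℝ}
    (hp : ∀ t ∈ T, 0 ≤ p t) (hkraft : ∑ t ∈ T, (2 : ℝ) ^ (-c t) ≤ ∑ t ∈ T, p t) :
    ∑ t ∈ T, -(p t * Real.logb 2 (p t)) ≤ ∑ t ∈ T, p t * c t := by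
  have hlog2 : 0 < Real.log 2 := Real.log_pos one_lt_two
  -- `log x ≤ x - 1` at `x = 2 ^ (-c) / p`, termwise
  have hterm : ∀ t ∈ T, -(p t * Real.logb 2 (p t)) - p t * c t
      ≤ ((2 : ℝ) ^ (-c t) - p t) / Real.log 2 := by
    intro t ht
    rw [le_div_iff₀ hlog2]
    rcases (hp t ht).eq_or_lt with h0 | h0
    · simp [← h0, Real.rpow_nonneg]
    · have hq : 0 < (2 : ℝ) ^ (-c t) := by positivity
      have h := Real.log_le_sub_one_of_pos (div_pos hq h0)
      rw [Real.log_div hq.ne' h0.ne', Real.log_rpow two_pos] at h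
      calc (-(p t * Real.logb 2 (p t)) - p t * c t) * Real.log 2
          = p t * (-c t * Real.log 2 - Real.log (p t)) := by
            unfold Real.logb; field_simp; ring
        _ ≤ p t * ((2 : ℝ) ^ (-c t) / p t - 1) := mul_le_mul_of_nonneg_left h h0.le
        _ = (2 : ℝ) ^ (-c t) - p t := by field_simp
  have hsum := Finset.sum_le_sum hterm
  rw [Finset.sum_sub_distrib, ← Finset.sum_div, Finset.sum_sub_distrib] at hsum
  have : (∑ t ∈ T, (2 : ℝ) ^ (-c t) - ∑ t ∈ T, p t) / Real.log 2 ≤ 0 :=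
    div_nonpos_of_nonpos_of_nonneg (by linarith) hlog2.le
  linarith

def fanoLength {β : Type*} [DecidableEq β] (x₀ : β) (K : ℝ) (t : β) : ℝ :=
  1 + if t = x₀ then 0 else Real.logb 2 (K - 1)

lemma Finset.sum_two_rpow_neg_fanoLength_le_one {β : Type*} [DecidableEq β] (T : Finset β)
    (x₀ : β) {K : ℝ} (hK : 2 ≤ K) (hTK : (T.card : ℝ) ≤ K) :
    ∑ t ∈ T, (2 : ℝ) ^ (-fanoLength x₀ K t) ≤ 1 := by
  have hK1 : 0 < K - 1 := by linarith
  have hlen : ∀ t, (2 : ℝ) ^ (-fanoLength x₀ K t)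
      = if t = x₀ then 1 / 2 else 1 / (2 * (K - 1)) := by
    intro t
    split_ifs with ht <;>
      simp [fanoLength, ht, Real.rpow_neg zero_le_two, Real.rpow_add two_pos,
        Real.rpow_logb two_pos (by norm_num) hK1]
  rw [Finset.sum_congr rfl fun t _ => hlen t, Finset.sum_ite, Finset.sum_const, Finset.sum_const,
    nsmul_eq_mul, nsmul_eq_mul]
  have hle1 : ((T.filter (· = x₀)).card : ℝ) ≤ 1 := by
    exact_mod_cast Finset.card_le_one.mpr fun a ha b hb => by simp_all
  have hsum : ((T.filter (· = x₀)).card : ℝ) + (T.filter (· ≠ x₀)).card ≤ K :=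
    le_trans (by exact_mod_cast (Finset.card_filter_add_card_filter_not (s := T) (· = x₀)).le) hTK
  rw [← sub_nonneg]
  field_simp
  nlinarith

variable {β : Type*} [MeasurableSpace β]

lemma pmfEntropy_eq_sum (ν : Measure β) (T : Finset β) (hT : ν (↑T)ᶜ = 0) :
    pmfEntropy ν = ∑ t ∈ T, ENNReal.ofReal (-((ν {t}).toReal * Real.logb 2 (ν {t}).toReal)) :=
  tsum_eq_sum fun b hb => by
    simp [measure_mono_null (by simpa using hb : {b} ⊆ (↑T : Set β)ᶜ) hT]

variable [MeasurableSingletonClass β] (κ : Measure β)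

lemma pmfEntropy_eq_zero_of_subsingleton [IsProbabilityMeasure κ] {S : Set β}
    (hS : S.Subsingleton) (hκS : κ Sᶜ = 0) :
    pmfEntropy κ = 0 := by
  refine ENNReal.tsum_eq_zero.mpr fun b => ?_
  by_cases hb : b ∈ S
  · have : κ {b} = 1 := by
      rw [← prob_compl_eq_zero_iff (measurableSet_singleton b)]
      exact measure_mono_null (compl_subset_compl.mpr fun x hx => hS hx hb) hκS
    simp [this]
  · simp [measure_mono_null (singleton_subset_iff.mpr hb : {b} ⊆ Sᶜ) hκS]

lemma toReal_measure_eq_sum_filter [IsFiniteMeasure κ] (T : Finset β) (hT : κ (↑T)ᶜ = 0)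
    (P : β → Prop) [DecidablePred P] : (κ {x | P x}).toReal = ∑ t ∈ T with P t, (κ {t}).toReal := by
  rw [← measure_inter_conull (s := {x | P x}) hT,
    ← ENNReal.toReal_sum fun _ _ => measure_ne_top _ _, sum_measure_singleton, Finset.coe_filter,
    inter_comm]
  rfl

theorem pmfEntropy_le_fano [IsProbabilityMeasure κ] (T : Finset β) (hT : κ (↑T)ᶜ = 0) {K : ℝ}
    (hTK : (T.card : ℝ) ≤ K) (x₀ : β) :
    pmfEntropy κ ≤ 1 + κ {x₀}ᶜ * ENNReal.ofReal (Real.logb 2 (K - 1)) := by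
  classical
  rcases le_or_gt T.card 1 with hcard | hcard
  · rw [pmfEntropy_eq_zero_of_subsingleton κ
      (fun a ha b hb => Finset.card_le_one.mp hcard a ha b hb) hT]
    exact zero_le
  have hK : 2 ≤ K := le_trans (by exact_mod_cast hcard) hTK
  set L := Real.logb 2 (K - 1)
  set p : β → ℝ := fun t => (κ {t}).toReal
  have hp_sum : ∑ t ∈ T, p t = 1 := by
    simpa using (toReal_measure_eq_sum_filter κ T hT fun _ => True).symm
  have hp_err : ∑ t ∈ T with t ≠ x₀, p t = (κ {x₀}ᶜ).toReal :=
    (toReal_measure_eq_sum_filter κ T hT (· ≠ x₀)).symm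
  have hlength : ∑ t ∈ T, p t * fanoLength x₀ K t = 1 + (κ {x₀}ᶜ).toReal * L := by
    simp only [fanoLength, mul_add, mul_one, Finset.sum_add_distrib, hp_sum, mul_ite, mul_zero,
      Finset.sum_ite, Finset.sum_const_zero, zero_add, ← Finset.sum_mul, hp_err, L]
  calc pmfEntropy κ = ENNReal.ofReal (∑ t ∈ T, -(p t * Real.logb 2 (p t))) := by
        rw [pmfEntropy_eq_sum κ T hT, ENNReal.ofReal_sum_of_nonneg]
        intro t _
        exact neg_nonneg.mpr (mul_nonpos_of_nonneg_of_nonpos ENNReal.toReal_nonneg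
          (Real.logb_nonpos one_lt_two ENNReal.toReal_nonneg measureReal_le_one))
    _ ≤ ENNReal.ofReal (1 + (κ {x₀}ᶜ).toReal * L) := by
        rw [← hlength]
        refine ENNReal.ofReal_le_ofReal (Finset.sum_neg_mul_logb_le_sum_mul_of_kraft T
          (fun _ _ => ENNReal.toReal_nonneg) ?_)
        exact hp_sum ▸ T.sum_two_rpow_neg_fanoLength_le_one x₀ hK hTK
    _ = 1 + κ {x₀}ᶜ * ENNReal.ofReal L := by
        have hL : 0 ≤ L := Real.logb_nonneg one_lt_two (by linarith)
        rw [ENNReal.ofReal_add zero_le_one (by positivity), ENNReal.ofReal_one,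
          ENNReal.ofReal_mul ENNReal.toReal_nonneg, ENNReal.ofReal_toReal (measure_ne_top _ _)]

end FiniteEntropy

section CondDistrib

variable {α β Ω : Type*} [MeasurableSpace α] [MeasurableSpace β] [MeasurableSpace Ω]
  [StandardBorelSpace Ω] [Nonempty Ω] {μ : Measure α} [IsFiniteMeasure μ] {Y : α → β} {Z : α → Ω}

lemma ae_ae_condDistrib_mem (hY : Measurable Y) (hZ : Measurable Z) {D : Set (β × Ω)}
    (hD : MeasurableSet D) (hYZ : ∀ a, (Y a, Z a) ∈ D) :
    ∀ᵐ y ∂μ.map Y, ∀ᵐ z ∂condDistrib Z Y μ y, (y, z) ∈ D := by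
  apply Measure.ae_ae_of_ae_compProd
  rw [compProd_map_condDistrib hZ.aemeasurable]
  exact (ae_map_iff (hY.prodMk hZ).aemeasurable hD).2 (ae_of_all _ hYZ)

lemma lintegral_condDistrib_compl_singleton (hY : Measurable Y) (hZ : Measurable Z) {f : β → Ω}
    (hf : Measurable f) :
    ∫⁻ y, condDistrib Z Y μ y {f y}ᶜ ∂μ.map Y = μ {a | Z a ≠ f (Y a)} := by
  have hE : MeasurableSet {p : β × Ω | p.2 ≠ f p.1} :=
    (measurableSet_eq_fun measurable_snd (hf.comp measurable_fst)).compl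
  calc ∫⁻ y, condDistrib Z Y μ y {f y}ᶜ ∂μ.map Y
      = ((μ.map Y) ⊗ₘ condDistrib Z Y μ) {p | p.2 ≠ f p.1} := (Measure.compProd_apply hE).symm
    _ = μ {a | Z a ≠ f (Y a)} := by
      rw [compProd_map_condDistrib hZ.aemeasurable, Measure.map_apply (hY.prodMk hZ) hE]
      rfl

theorem condEnt_le_fano (hY : Measurable Y) (hZ : Measurable Z) {f : β → Ω} (hf : Measurable f)
    {F : β → Set Ω} (hF : ∀ᵐ y ∂μ.map Y, ∀ᵐ z ∂condDistrib Z Y μ y, z ∈ F y)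
    (hF_fin : ∀ y, (F y).Finite) {K : ℝ} (hK : ∀ᵐ y ∂μ.map Y, ((F y).ncard : ℝ) ≤ K)
    {B : Set β} (hB : MeasurableSet B) (hFB : ∀ᵐ y ∂μ.map Y, y ∈ B → (F y).Subsingleton) :
    condEnt μ Z Y ≤ μ.map Y Bᶜ + μ {a | Z a ≠ f (Y a)} * ENNReal.ofReal (Real.logb 2 (K - 1)) := by
  set κ := condDistrib Z Y μ
  set L := ENNReal.ofReal (Real.logb 2 (K - 1))
  have hpointwise : ∀ᵐ y ∂μ.map Y,
      pmfEntropy (κ y) ≤ Bᶜ.indicator (fun y => 1 + κ y {f y}ᶜ * L) y := by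
    filter_upwards [hF, hK, hFB] with y hyF hyK hyB
    have hnull : κ y (F y)ᶜ = 0 := hyF
    by_cases hy : y ∈ B
    · rw [pmfEntropy_eq_zero_of_subsingleton _ (hyB hy) hnull]
      exact zero_le
    · rw [indicator_of_mem (mem_compl hy)]
      refine pmfEntropy_le_fano _ (hF_fin y).toFinset (by simpa using hnull) ?_ (f y)
      rwa [← ncard_eq_toFinset_card _ (hF_fin y)]
  calc condEnt μ Z Y ≤ ∫⁻ y, Bᶜ.indicator (fun y => 1 + κ y {f y}ᶜ * L) y ∂μ.map Y :=
        lintegral_mono_ae hpointwise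
    _ = μ.map Y Bᶜ + (∫⁻ y in Bᶜ, κ y {f y}ᶜ ∂μ.map Y) * L := by
        rw [lintegral_indicator hB.compl, lintegral_add_left measurable_const, setLIntegral_const,
          one_mul, lintegral_mul_const' _ _ ENNReal.ofReal_ne_top]
    _ ≤ μ.map Y Bᶜ + (∫⁻ y, κ y {f y}ᶜ ∂μ.map Y) * L := by
        gcongr
        exact Measure.restrict_le_self
    _ = μ.map Y Bᶜ + μ {a | Z a ≠ f (Y a)} * L := by
        rw [lintegral_condDistrib_compl_singleton hY hZ hf]

end CondDistrib

lemma ae_ncard_le_toReal_essSup {β γ : Type*} [MeasurableSpace β] {ν : Measure β}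
    {S : β → Set γ} {N : ℕ} (hS : ∀ y, (S y).encard ≤ N) :
    ∀ᵐ y ∂ν, ((S y).ncard : ℝ) ≤ (essSup (fun y => ((S y).encard : ℝ≥0∞)) ν).toReal := by
  have htop : essSup (fun y => ((S y).encard : ℝ≥0∞)) ν ≠ ⊤ :=
    ne_top_of_le_ne_top (ENNReal.natCast_ne_top N)
      (essSup_le_of_ae_le _ (ae_of_all _ fun y => by simpa using ENat.toENNReal_le.2 (hS y)))
  filter_upwards [ENNReal.ae_le_essSup fun y => ((S y).encard : ℝ≥0∞)] with y hy
  have h := ENNReal.toReal_mono htop hy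
  rwa [← (finite_of_encard_le_coe (hS y)).cast_ncard_eq] at h

section BijectivePart

variable {E F : Type*} {g : E → F} {s : Set E}

def bijectivePart (g : E → F) (s : Set E) : Set E :=
  {x | x ∈ s ∧ (s ∩ g ⁻¹' {g x}).encard = 1}

lemma mem_bijectivePart_iff {x : E} :
    x ∈ bijectivePart g s ↔ x ∈ s ∧ ∀ z ∈ s, g z = g x → z = x := by
  refine and_congr_right fun hx => ?_
  rw [encard_eq_one]
  constructor
  · rintro ⟨w, hw⟩ z hz hgz
    have hz' : z ∈ s ∩ g ⁻¹' {g x} := ⟨hz, hgz⟩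
    have hx' : x ∈ s ∩ g ⁻¹' {g x} := ⟨hx, rfl⟩
    rw [hw] at hz' hx'
    exact hz'.trans hx'.symm
  · exact fun h => ⟨x, eq_singleton_iff_unique_mem.2 ⟨⟨hx, rfl⟩, fun z hz => h z hz.1 hz.2⟩⟩

lemma bijectivePart_subset : bijectivePart g s ⊆ s := fun _ hx => hx.1

lemma injOn_bijectivePart : InjOn g (bijectivePart g s) := fun _ hx z hz hgz =>
  ((mem_bijectivePart_iff.1 hx).2 z hz.1 hgz.symm).symm

lemma subsingleton_fiber_of_mem_image_bijectivePart {y : F} (hy : y ∈ g '' bijectivePart g s) :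
    (s ∩ g ⁻¹' {y}).Subsingleton := by
  obtain ⟨x, hx, rfl⟩ := hy
  have h := (mem_bijectivePart_iff.1 hx).2
  exact fun z hz w hw => (h z hz.1 hz.2).trans (h w hw.1 hw.2).symm

lemma inter_preimage_image_bijectivePart :
    s ∩ g ⁻¹' (g '' bijectivePart g s) = bijectivePart g s := by
  refine Subset.antisymm ?_ fun x hx => ⟨hx.1, mem_image_of_mem g hx⟩
  rintro x ⟨hxs, z, hz, hgz⟩
  rwa [(mem_bijectivePart_iff.1 hz).2 x hxs hgz.symm]

end BijectivePart

namespace IsPBF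

variable {ι I : Type*} [Fintype ι] [Countable I] {g : (ι → ℝ) → ι → ℝ} {s : Set (ι → ℝ)}
  {pieces : I → Set (ι → ℝ)} {J : (ι → ℝ) → (ι → ℝ) →L[ℝ] (ι → ℝ)} {ν : Measure (ι → ℝ)}

lemma subset (hpbf : IsPBF g s pieces J ν) (i : I) : pieces i ⊆ s :=
  hpbf.cover ▸ subset_iUnion pieces i

lemma exists_mem (hpbf : IsPBF g s pieces J ν) {x : ι → ℝ} (hx : x ∈ s) : ∃ i, x ∈ pieces i :=
  mem_iUnion.1 (hpbf.cover ▸ hx)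

lemma bijectivePart_eq (hpbf : IsPBF g s pieces J ν) :
    bijectivePart g s = ⋃ i, pieces i \ g ⁻¹' ⋃ j ∈ ({i}ᶜ : Set I), g '' pieces j := by
  ext x
  simp only [mem_bijectivePart_iff, mem_iUnion, Set.mem_sdiff, mem_preimage, mem_compl_iff,
    mem_singleton_iff, mem_image, exists_prop, not_exists, not_and]
  constructor
  · rintro ⟨hxs, hx⟩
    obtain ⟨i, hxi⟩ := hpbf.exists_mem hxs
    refine ⟨i, hxi, fun j hji z hzj hgz => hji ?_⟩
    rw [hx z (hpbf.subset j hzj) hgz] at hzj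
    exact hpbf.disj.eq (not_disjoint_iff.2 ⟨x, hzj, hxi⟩)
  · rintro ⟨i, hxi, hx⟩
    refine ⟨hpbf.subset i hxi, fun z hzs hgz => ?_⟩
    obtain ⟨j, hzj⟩ := hpbf.exists_mem hzs
    by_cases hji : j = i
    · exact hpbf.injOn i (hji ▸ hzj) hxi hgz
    · exact absurd hgz (hx j hji z hzj)

lemma measurableSet_bijectivePart (hpbf : IsPBF g s pieces J ν) :
    MeasurableSet (bijectivePart g s) := by
  rw [hpbf.bijectivePart_eq]
  exact MeasurableSet.iUnion fun i => (hpbf.measSet i).diff <| hpbf.meas <|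
    MeasurableSet.biUnion (to_countable _) fun j _ =>
      (hpbf.measSet j).image_of_measurable_injOn hpbf.meas (hpbf.injOn j)

lemma measurableSet_image_bijectivePart (hpbf : IsPBF g s pieces J ν) :
    MeasurableSet (g '' bijectivePart g s) :=
  hpbf.measurableSet_bijectivePart.image_of_measurable_injOn hpbf.meas injOn_bijectivePart

lemma encard_fiber_le [Fintype I] (hpbf : IsPBF g s pieces J ν) (y : ι → ℝ) :
    (s ∩ g ⁻¹' {y}).encard ≤ Fintype.card I :=
  calc (s ∩ g ⁻¹' {y}).encard = (⋃ i, pieces i ∩ g ⁻¹' {y}).encard := by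
        rw [← iUnion_inter, hpbf.cover]
    _ ≤ ∑ i, (pieces i ∩ g ⁻¹' {y}).encard := encard_iUnion_le_of_fintype _
    _ ≤ ∑ _ : I, 1 := Finset.sum_le_sum fun i _ => encard_le_one_iff_subsingleton.2
        fun _ ha _ hb => hpbf.injOn i ha.1 hb.1 (ha.2.trans hb.2.symm)
    _ = Fintype.card I := by simp

lemma finite_fiber [Fintype I] (hpbf : IsPBF g s pieces J ν) (y : ι → ℝ) :
    (s ∩ g ⁻¹' {y}).Finite :=
  finite_of_encard_le_coe (hpbf.encard_fiber_le y)

variable {α : Type*} [MeasurableSpace α] {μ : Measure α} {X : α → ι → ℝ}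

lemma ae_ae_condDistrib_mem_image_fiber {Ω : Type*} [MeasurableSpace Ω] [StandardBorelSpace Ω]
    [Nonempty Ω] [IsFiniteMeasure μ] (hpbf : IsPBF g s pieces J ν) (hX : Measurable X)
    (hXs : ∀ a, X a ∈ s) {h : (ι → ℝ) → Ω} (hh : Measurable h) :
    ∀ᵐ y ∂μ.map (fun a => g (X a)), ∀ᵐ z ∂condDistrib (fun a => h (X a)) (fun a => g (X a)) μ y,
      z ∈ h '' (s ∩ g ⁻¹' {y}) := by
  have hD : MeasurableSet (⋃ i, (fun x => (g x, h x)) '' pieces i) :=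
    MeasurableSet.iUnion fun i => (hpbf.measSet i).image_of_measurable_injOn
      (hpbf.meas.prodMk hh) fun u hu v hv huv => hpbf.injOn i hu hv (congrArg Prod.fst huv)
  have hgraph : ∀ a, (g (X a), h (X a)) ∈ ⋃ i, (fun x => (g x, h x)) '' pieces i := fun a =>
    have ⟨i, hi⟩ := hpbf.exists_mem (hXs a)
    mem_iUnion.2 ⟨i, X a, hi, rfl⟩
  filter_upwards [ae_ae_condDistrib_mem (hpbf.meas.comp hX) (hh.comp hX) hD hgraph] with y hy
  filter_upwards [hy] with z hz
  obtain ⟨i, x, hxi, hx⟩ := mem_iUnion.1 hz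
  simp only [Prod.mk.injEq] at hx
  exact ⟨x, ⟨hpbf.subset i hxi, hx.1⟩, hx.2⟩

lemma map_compl_image_bijectivePart [IsProbabilityMeasure μ] (hpbf : IsPBF g s pieces J ν)
    (hX : Measurable X) (hXs : ∀ a, X a ∈ s) :
    μ.map (fun a => g (X a)) (g '' bijectivePart g s)ᶜ = 1 - μ.map X (bijectivePart g s) := by
  have hY : Measurable fun a => g (X a) := hpbf.meas.comp hX
  have := Measure.isProbabilityMeasure_map (μ := μ) hY.aemeasurable
  rw [prob_compl_eq_one_sub hpbf.measurableSet_image_bijectivePart,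
    Measure.map_apply hY hpbf.measurableSet_image_bijectivePart,
    Measure.map_apply hX hpbf.measurableSet_bijectivePart]
  congr 2
  ext a
  refine ⟨fun h => ?_, fun h => mem_image_of_mem g h⟩
  rw [← inter_preimage_image_bijectivePart]
  exact ⟨hXs a, h⟩

lemma setOf_reconstruct_eq {k : I} {r : (ι → ℝ) → ι → ℝ} (hpbf : IsPBF g s pieces J ν)
    (hr₁ : ∀ y ∈ g '' bijectivePart g s, r y ∈ bijectivePart g s ∧ g (r y) = y)
    (hr₂ : ∀ y ∈ g '' pieces k, y ∉ g '' bijectivePart g s → r y ∈ pieces k ∧ g (r y) = y)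
    (hr₃ : ∀ y, y ∉ g '' pieces k → y ∉ g '' bijectivePart g s → r y ∈ pieces k) :
    {x | x ∈ s ∧ r (g x) = x} = pieces k ∪ bijectivePart g s := by
  ext x
  constructor
  · rintro ⟨-, hx⟩
    rw [← hx]
    by_cases hb : g x ∈ g '' bijectivePart g s
    · exact Or.inr (hr₁ _ hb).1
    by_cases hk : g x ∈ g '' pieces k
    · exact Or.inl (hr₂ _ hk hb).1
    · exact Or.inl (hr₃ _ hk hb)
  · rintro (hxk | hxb)
    · refine ⟨hpbf.subset k hxk, ?_⟩
      by_cases hb : g x ∈ g '' bijectivePart g s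
      · obtain ⟨hrb, hrg⟩ := hr₁ _ hb
        exact ((mem_bijectivePart_iff.1 hrb).2 x (hpbf.subset k hxk) hrg.symm).symm
      · obtain ⟨hrk, hrg⟩ := hr₂ _ ⟨x, hxk, rfl⟩ hb
        exact hpbf.injOn k hrk hxk hrg
    · obtain ⟨hrb, hrg⟩ := hr₁ _ ⟨x, hxb, rfl⟩
      exact ⟨hxb.1, (mem_bijectivePart_iff.1 hxb).2 _ (bijectivePart_subset hrb) hrg⟩

lemma measure_reconstruct_ne [IsProbabilityMeasure μ] {k : I} {r : (ι → ℝ) → ι → ℝ}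
    (hpbf : IsPBF g s pieces J ν) (hX : Measurable X) (hXs : ∀ a, X a ∈ s)
    (hr₁ : ∀ y ∈ g '' bijectivePart g s, r y ∈ bijectivePart g s ∧ g (r y) = y)
    (hr₂ : ∀ y ∈ g '' pieces k, y ∉ g '' bijectivePart g s → r y ∈ pieces k ∧ g (r y) = y)
    (hr₃ : ∀ y, y ∉ g '' pieces k → y ∉ g '' bijectivePart g s → r y ∈ pieces k) :
    μ {a | r (g (X a)) ≠ X a} = 1 - μ.map X (pieces k ∪ bijectivePart g s) := by
  have hmeas := (hpbf.measSet k).union hpbf.measurableSet_bijectivePart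
  have hpre : {a | r (g (X a)) ≠ X a} = (X ⁻¹' (pieces k ∪ bijectivePart g s))ᶜ := by
    rw [← hpbf.setOf_reconstruct_eq hr₁ hr₂ hr₃]
    ext a
    simp [hXs a]
  rw [hpre, prob_compl_eq_one_sub (hX hmeas), Measure.map_apply hX hmeas]

theorem infoLoss_le [Fintype I] [IsFiniteMeasure μ] (hpbf : IsPBF g s pieces J ν)
    (hX : Measurable X) (hXs : ∀ a, X a ∈ s) {r : (ι → ℝ) → ι → ℝ} (hr : Measurable r)
    {B : Set (ι → ℝ)} (hB : MeasurableSet B)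
    (hBs : ∀ᵐ y ∂μ.map (fun a => g (X a)), y ∈ B → (s ∩ g ⁻¹' {y}).Subsingleton) {K : ℝ}
    (hK : ∀ᵐ y ∂μ.map (fun a => g (X a)), ((s ∩ g ⁻¹' {y}).ncard : ℝ) ≤ K) :
    infoLoss μ X (fun a => g (X a)) ≤ μ.map (fun a => g (X a)) Bᶜ
      + μ {a | r (g (X a)) ≠ X a} * ENNReal.ofReal (Real.logb 2 (K - 1)) := by
  refine iSup_le fun n => ?_
  have hq := measurable_quant (ι := ι) n
  refine (condEnt_le_fano (Y := fun a => g (X a)) (Z := fun a => quant n (X a))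
    (f := fun y => quant n (r y)) (K := K) (hpbf.meas.comp hX) (hq.comp hX) (hq.comp hr)
    (hpbf.ae_ae_condDistrib_mem_image_fiber hX hXs hq) (fun y => (hpbf.finite_fiber y).image _)
    ?_ hB ?_).trans ?_
  · filter_upwards [hK] with y hy
    exact le_trans (by exact_mod_cast ncard_image_le (hpbf.finite_fiber y)) hy
  · filter_upwards [hBs] with y hy hyB
    exact (hy hyB).image _
  · gcongr _ + ?_ * _
    exact measure_mono fun a ha hra => ha (by rw [hra])

theorem infoLoss_eq_zero_of_ae_subsingleton [Fintype I] [IsFiniteMeasure μ]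
    (hpbf : IsPBF g s pieces J ν) (hX : Measurable X) (hXs : ∀ a, X a ∈ s)
    (hsub : ∀ᵐ y ∂μ.map (fun a => g (X a)), (s ∩ g ⁻¹' {y}).Subsingleton) :
    infoLoss μ X (fun a => g (X a)) = 0 := by
  have hK : ∀ᵐ y ∂μ.map (fun a => g (X a)), ((s ∩ g ⁻¹' {y}).ncard : ℝ) ≤ 1 := by
    filter_upwards [hsub] with y hy
    exact_mod_cast (ncard_le_one (hpbf.finite_fiber y)).2 hy
  have h := hpbf.infoLoss_le hX hXs measurable_id MeasurableSet.univ
    (hsub.mono fun _ hy _ => hy) hK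
  rwa [compl_univ, measure_empty, sub_self, Real.logb_zero, ENNReal.ofReal_zero, mul_zero,
    add_zero, nonpos_iff_eq_zero] at h

end IsPBF

theorem infoLoss_pbf_suboptimal_reconstructor_general
    {α ι I : Type*} [MeasurableSpace α] [Fintype ι] [Fintype I]
    (μ : Measure α) [IsProbabilityMeasure μ]
    (X : α → ι → ℝ) (hX : Measurable X)
    (g : (ι → ℝ) → ι → ℝ) (s : Set (ι → ℝ)) (pieces : I → Set (ι → ℝ))
    (J : (ι → ℝ) → (ι → ℝ) →L[ℝ] (ι → ℝ))
    (hpbf : IsPBF g s pieces J (μ.map X))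
    (hXs : ∀ a, X a ∈ s)
    (Xb : Set (ι → ℝ)) (hXb : Xb = {x | x ∈ s ∧ (s ∩ g ⁻¹' {g x}).encard = 1})
    (Pb : ℝ) (hPb : Pb = ((μ.map X) Xb).toReal)
    (k : I)
    (r : (ι → ℝ) → ι → ℝ) (hr : Measurable r)
    (hr₁ : ∀ y ∈ g '' Xb, r y ∈ Xb ∧ g (r y) = y)
    (hr₂ : ∀ y ∈ g '' pieces k, y ∉ g '' Xb → r y ∈ pieces k ∧ g (r y) = y)
    (hr₃ : ∀ y, y ∉ g '' pieces k → y ∉ g '' Xb → r y ∈ pieces k)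
    (Pehat : ℝ) (hPehat : Pehat = 1 - ((μ.map X) (pieces k ∪ Xb)).toReal)
    (Kbar : ℝ) (hKbar : Kbar = (essSup (fun y => ((s ∩ g ⁻¹' {y}).encard : ℝ≥0∞))
      (μ.map fun a => g (X a))).toReal) :
    (μ {a | r (g (X a)) ≠ X a}).toReal = Pehat ∧
    infoLoss μ X (fun a => g (X a)) ≤
      ENNReal.ofReal (1 - Pb + Pehat * Real.logb 2 (Kbar - 1)) := by
  obtain rfl : Xb = bijectivePart g s := hXb
  have := Measure.isProbabilityMeasure_map (μ := μ) hX.aemeasurable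
  have hPe : (μ {a | r (g (X a)) ≠ X a}).toReal = Pehat := by
    rw [hpbf.measure_reconstruct_ne hX hXs hr₁ hr₂ hr₃, hPehat,
      ENNReal.toReal_sub_of_le prob_le_one ENNReal.one_ne_top, ENNReal.toReal_one]
  refine ⟨hPe, ?_⟩
  have hK : ∀ᵐ y ∂μ.map (fun a => g (X a)), ((s ∩ g ⁻¹' {y}).ncard : ℝ) ≤ Kbar :=
    hKbar ▸ ae_ncard_le_toReal_essSup hpbf.encard_fiber_le
  rcases lt_or_ge Kbar 2 with hK2 | hK2
  · rw [hpbf.infoLoss_eq_zero_of_ae_subsingleton hX hXs]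
    · exact zero_le
    filter_upwards [hK] with y hy
    have hlt : (s ∩ g ⁻¹' {y}).ncard < 2 := by exact_mod_cast hy.trans_lt hK2
    exact (ncard_le_one (hpbf.finite_fiber y)).1 (Nat.lt_succ_iff.1 hlt)
  have hPb' : 0 ≤ 1 - Pb := sub_nonneg.2 (hPb ▸ measureReal_le_one)
  have hPe' : 0 ≤ Pehat := hPe ▸ ENNReal.toReal_nonneg
  calc infoLoss μ X (fun a => g (X a))
      ≤ μ.map (fun a => g (X a)) (g '' bijectivePart g s)ᶜ
          + μ {a | r (g (X a)) ≠ X a} * ENNReal.ofReal (Real.logb 2 (Kbar - 1)) :=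
        hpbf.infoLoss_le hX hXs hr hpbf.measurableSet_image_bijectivePart
          (ae_of_all _ fun _ => subsingleton_fiber_of_mem_image_bijectivePart) hK
    _ = ENNReal.ofReal (1 - Pb + Pehat * Real.logb 2 (Kbar - 1)) := by
        rw [ENNReal.ofReal_add hPb' (mul_nonneg hPe' (Real.logb_nonneg one_lt_two (by linarith))),
          ENNReal.ofReal_mul hPe', ← hPe, ENNReal.ofReal_toReal (measure_ne_top _ _), hPb,
          ENNReal.ofReal_sub _ ENNReal.toReal_nonneg, ENNReal.ofReal_one,
          ENNReal.ofReal_toReal (measure_ne_top _ _), hpbf.map_compl_image_bijectivePart hX hXs]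

/-- **Suboptimal reconstruction for PBFs.**  Let `g` be piecewise bijective with a
finite partition, `P_X ≪ μᴺ` supported on `𝒳`, `Y = g(X)`.  With bijective part
`𝒳_b`, `𝒴_b = g(𝒳_b)`, `P_b = P_X(𝒳_b)`, let `k` maximize `P_X(𝒳ᵢ ∪ 𝒳_b)` and let
`r_sub` invert `g` on `𝒴_b`, invert `g_k` on `𝒴_k ∖ 𝒴_b`, and return some point of
`𝒳_k` otherwise.  Then its error probability is `P̂_e = 1 − P_X(𝒳_k ∪ 𝒳_b)` and,
with `K̄ = ess supᵧ card g⁻¹[{y}]`, the information loss satisfies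
`L(X→Y) ≤ 1 − P_b + P̂_e log₂(K̄ − 1)`. -/
theorem infoLoss_pbf_suboptimal_reconstructor
    {α ι I : Type*} [MeasurableSpace α] [Fintype ι] [Fintype I]
    (μ : Measure α) [IsProbabilityMeasure μ]
    (X : α → ι → ℝ) (hX : Measurable X)
    (g : (ι → ℝ) → ι → ℝ) (s : Set (ι → ℝ)) (pieces : I → Set (ι → ℝ))
    (J : (ι → ℝ) → (ι → ℝ) →L[ℝ] (ι → ℝ))
    (hpbf : IsPBF g s pieces J (μ.map X))
    (hac : μ.map X ≪ (volume : Measure (ι → ℝ)))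
    (hXs : ∀ a, X a ∈ s)
    (Xb : Set (ι → ℝ)) (hXb : Xb = {x | x ∈ s ∧ (s ∩ g ⁻¹' {g x}).encard = 1})
    (Pb : ℝ) (hPb : Pb = ((μ.map X) Xb).toReal)
    (k : I) (hk : ∀ i, (μ.map X) (pieces i ∪ Xb) ≤ (μ.map X) (pieces k ∪ Xb))
    (r : (ι → ℝ) → ι → ℝ) (hr : Measurable r)
    (hr₁ : ∀ y ∈ g '' Xb, r y ∈ Xb ∧ g (r y) = y)
    (hr₂ : ∀ y ∈ g '' pieces k, y ∉ g '' Xb → r y ∈ pieces k ∧ g (r y) = y)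
    (hr₃ : ∀ y, y ∉ g '' pieces k → y ∉ g '' Xb → r y ∈ pieces k)
    (Pehat : ℝ) (hPehat : Pehat = 1 - ((μ.map X) (pieces k ∪ Xb)).toReal)
    (Kbar : ℝ) (hKbar : Kbar = (essSup (fun y => ((s ∩ g ⁻¹' {y}).encard : ℝ≥0∞))
      (μ.map fun a => g (X a))).toReal) :
    (μ {a | r (g (X a)) ≠ X a}).toReal = Pehat ∧
    infoLoss μ X (fun a => g (X a)) ≤
      ENNReal.ofReal (1 - Pb + Pehat * Real.logb 2 (Kbar - 1)) :=
  infoLoss_pbf_suboptimal_reconstructor_general μ X hX g s pieces J hpbf hXs Xb hXb Pb hPb k r hr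
    hr₁ hr₂ hr₃ Pehat hPehat Kbar hKbar
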